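/- Let $E,A\in\mathbb{C}^{n\times n}$, $B\in\mathbb{C}^{n\times m}$ with $B\neq 0$, $G(z)=(zE-A)^{-1}B$, and let $\widetilde{G}$ be the interpolatory barycentric surrogate with distinct support points $z_j$ (each $z_jE-A$ invertible) and weights $q_j$, with denominator $Q(z)=\sum_j q_j/(z-z_j)$. Then for every $z$ with $zE-A$ invertible, $z\notin\{z_1,\dots,z_S\}$, and $Q(z)\neq 0$, the relative error satisfies $\|\widetilde{G}(z)-G(z)\|_F/\|G(z)\|_F\le \gamma\,\mathcal{K}(zE-A)\,|Q(z)|^{-1}$, where $\gamma=\|\sum_j q_jEG(z_j)\|_F/\|B\|_F$ and $\mathcal{K}(M)$ denotes the ratio of the largest to the smallest singular value of $M$. (Here $G(z)\neq 0$ since $B\neq 0$ and $zE-A$ is invertible.) -/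

import Mathlib

/-!
Since `(zE - A) G(zⱼ) = B + (z - zⱼ) E G(zⱼ)`, the surrogate has residual
`(zE - A) G̃(z) - B = Q(z)⁻¹ R` with `R = ∑ⱼ qⱼ E G(zⱼ)`, so
`G̃(z) - G(z) = Q(z)⁻¹ (zE - A)⁻¹ R`. The classical bound
`‖M⁻¹R‖ / ‖M⁻¹B‖ ≤ 𝒦(M) ‖R‖ / ‖B‖`, from `‖M⁻¹R‖ ≤ σ_max(M⁻¹) ‖R‖` and
`‖B‖ ≤ σ_max(M) ‖M⁻¹B‖`, then gives the estimate.
-/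

/-- The Frobenius norm of a complex matrix. -/
noncomputable def frob {a b : ℕ} (M : Matrix (Fin a) (Fin b) ℂ) : ℝ :=
  Real.sqrt (∑ i, ∑ j, ‖M i j‖ ^ 2)

/-- The spectral norm (largest singular value) of a complex matrix. -/
noncomputable def spec {a b : ℕ} (M : Matrix (Fin a) (Fin b) ℂ) : ℝ :=
  ‖LinearMap.toContinuousLinearMap (Matrix.toEuclideanLin M)‖

/-- The (Euclidean) condition number of an invertible matrix: the ratio of its largest
and smallest singular values, i.e. `σ_max(M) * σ_max(M⁻¹)`. -/
noncomputable def condNum {a : ℕ} (M : Matrix (Fin a) (Fin a) ℂ) : ℝ :=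
  spec M * spec M⁻¹

section Pencil

variable {K n m ι : Type*} [Field K] [Fintype n] [Fintype ι]
  (E A : Matrix n n K) {B : Matrix n m K}

lemma pencil_mul_eq_add_smul {ζ : K} {X : Matrix n m K} (hX : (ζ • E - A) * X = B) (w : K) :
    (w • E - A) * X = B + (w - ζ) • (E * X) := by
  rw [← hX, ← Matrix.smul_mul, ← Matrix.add_mul, sub_smul]
  abel_nf

lemma pencil_mul_barycentric_sum {ζ : ι → K} {X : ι → Matrix n m K}
    (hX : ∀ j, (ζ j • E - A) * X j = B) (q : ι → K) {w : K} (hw : ∀ j, w - ζ j ≠ 0) :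
    (w • E - A) * ∑ j, (q j / (w - ζ j)) • X j =
      (∑ j, q j / (w - ζ j)) • B + ∑ j, q j • (E * X j) := by
  have hterm : ∀ j, (w • E - A) * (q j / (w - ζ j)) • X j =
      (q j / (w - ζ j)) • B + q j • (E * X j) := fun j => by
    rw [Matrix.mul_smul, pencil_mul_eq_add_smul E A (hX j), smul_add, smul_smul,
      div_mul_cancel₀ _ (hw j)]
  rw [Matrix.mul_sum, Finset.sum_congr rfl fun j _ => hterm j, Finset.sum_add_distrib,
    Finset.sum_smul]

end Pencil

lemma inv_smul_sub_nonsing_inv_mul {K n m : Type*} [Field K] [Fintype n] [DecidableEq n]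
    {M : Matrix n n K} (hM : IsUnit M) {c : K} (hc : c ≠ 0) {B Y R : Matrix n m K}
    (hY : M * Y = c • B + R) :
    c⁻¹ • Y - M⁻¹ * B = c⁻¹ • (M⁻¹ * R) := by
  have hdet := (Matrix.isUnit_iff_isUnit_det M).mp hM
  rw [← Matrix.nonsing_inv_mul_cancel_left M Y hdet, hY, Matrix.mul_add, Matrix.mul_smul,
    smul_add, inv_smul_smul₀ hc, add_sub_cancel_left]

section Norms

variable {a b c : ℕ}

lemma frob_nonneg (M : Matrix (Fin a) (Fin b) ℂ) : 0 ≤ frob M :=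
  Real.sqrt_nonneg _

lemma spec_nonneg (M : Matrix (Fin a) (Fin b) ℂ) : 0 ≤ spec M :=
  norm_nonneg _

lemma frob_sq (M : Matrix (Fin a) (Fin b) ℂ) : frob M ^ 2 = ∑ i, ∑ j, ‖M i j‖ ^ 2 :=
  Real.sq_sqrt (by positivity)

lemma frob_pos {M : Matrix (Fin a) (Fin b) ℂ} (hM : M ≠ 0) : 0 < frob M := by
  obtain ⟨i, j, hij⟩ : ∃ i j, M i j ≠ 0 := by
    by_contra! h
    exact hM (Matrix.ext h)
  refine Real.sqrt_pos.mpr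
    (Finset.sum_pos' (fun _ _ => by positivity) ⟨i, Finset.mem_univ _, ?_⟩)
  exact Finset.sum_pos' (fun _ _ => by positivity) ⟨j, Finset.mem_univ _, by positivity⟩

lemma frob_smul (s : ℂ) (M : Matrix (Fin a) (Fin b) ℂ) : frob (s • M) = ‖s‖ * frob M := by
  simp only [frob, Matrix.smul_apply, smul_eq_mul, norm_mul, mul_pow, ← Finset.mul_sum]
  rw [Real.sqrt_mul (by positivity), Real.sqrt_sq (norm_nonneg s)]

lemma frob_sq_eq_sum_norm_col_sq (N : Matrix (Fin b) (Fin c) ℂ) :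
    frob N ^ 2 = ∑ j, ‖WithLp.toLp 2 (fun i => N i j)‖ ^ 2 := by
  simp only [frob_sq, EuclideanSpace.norm_sq_eq]
  exact Finset.sum_comm

lemma frob_mul_le (M : Matrix (Fin a) (Fin b) ℂ) (N : Matrix (Fin b) (Fin c) ℂ) :
    frob (M * N) ≤ spec M * frob N := by
  have hcol : ∀ j, ‖WithLp.toLp 2 (fun i => (M * N) i j)‖ ≤
      spec M * ‖WithLp.toLp 2 (fun i => N i j)‖ := fun j => by
    have hMcol : LinearMap.toContinuousLinearMap (Matrix.toEuclideanLin M)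
        (WithLp.toLp 2 fun i => N i j) = WithLp.toLp 2 fun i => (M * N) i j := by
      ext i
      simp [Matrix.mul_apply, Matrix.mulVec, dotProduct]
    exact hMcol ▸ (LinearMap.toContinuousLinearMap (Matrix.toEuclideanLin M)).le_opNorm _
  rw [← pow_le_pow_iff_left₀ (frob_nonneg _)
    (mul_nonneg (spec_nonneg M) (frob_nonneg N)) two_ne_zero, mul_pow,
    frob_sq_eq_sum_norm_col_sq, frob_sq_eq_sum_norm_col_sq, Finset.mul_sum]
  gcongr with j
  rw [← mul_pow]
  exact pow_le_pow_left₀ (norm_nonneg _) (hcol j) 2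

lemma frob_inv_mul_div_le_condNum_mul {M : Matrix (Fin a) (Fin a) ℂ} (hM : IsUnit M)
    {B : Matrix (Fin a) (Fin b) ℂ} (hB : B ≠ 0) (R : Matrix (Fin a) (Fin b) ℂ) :
    frob (M⁻¹ * R) / frob (M⁻¹ * B) ≤ condNum M * (frob R / frob B) := by
  have hMB : M * (M⁻¹ * B) = B :=
    Matrix.mul_nonsing_inv_cancel_left M B ((Matrix.isUnit_iff_isUnit_det M).mp hM)
  have hG : 0 < frob (M⁻¹ * B) := frob_pos fun h => hB (by rw [← hMB, h, Matrix.mul_zero])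
  have hB_le : frob B ≤ spec M * frob (M⁻¹ * B) := by
    simpa only [hMB] using frob_mul_le M (M⁻¹ * B)
  rw [div_le_iff₀ hG, condNum]
  calc frob (M⁻¹ * R) ≤ spec M⁻¹ * frob R := frob_mul_le _ _
    _ = spec M⁻¹ * (frob R / frob B) * frob B := by
        rw [mul_assoc, div_mul_cancel₀ _ (frob_pos hB).ne']
    _ ≤ spec M⁻¹ * (frob R / frob B) * (spec M * frob (M⁻¹ * B)) := by
        gcongr
        exact mul_nonneg (spec_nonneg _) (div_nonneg (frob_nonneg R) (frob_nonneg B))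
    _ = spec M * spec M⁻¹ * (frob R / frob B) * frob (M⁻¹ * B) := by ring

end Norms

theorem state_relative_error_bound_general
    {n m S : ℕ}
    (E A : Matrix (Fin n) (Fin n) ℂ) (B : Matrix (Fin n) (Fin m) ℂ)
    (hB : B ≠ 0)
    (z : Fin S → ℂ)
    (hinv : ∀ j, IsUnit (z j • E - A))
    (q : Fin S → ℂ)
    (G : ℂ → Matrix (Fin n) (Fin m) ℂ)
    (hG : ∀ w, G w = (w • E - A)⁻¹ * B)
    (Q : ℂ → ℂ) (hQ : ∀ w, Q w = ∑ j, q j / (w - z j))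
    (Gt : ℂ → Matrix (Fin n) (Fin m) ℂ)
    (hGt : ∀ w, Gt w = (Q w)⁻¹ • ∑ j, (q j / (w - z j)) • G (z j))
    (γ : ℝ) (hγ : γ = frob (∑ j, q j • (E * G (z j))) / frob B) :
    ∀ w : ℂ, IsUnit (w • E - A) → w ∉ Set.range z → Q w ≠ 0 →
      frob (Gt w - G w) / frob (G w) ≤ γ * condNum (w • E - A) * ‖Q w‖⁻¹ := by
  intro w hw hwz hQw
  set R := ∑ j, q j • (E * G (z j))
  have hGz : ∀ j, (z j • E - A) * G (z j) = B := fun j => by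
    rw [hG, Matrix.mul_nonsing_inv_cancel_left _ _ ((Matrix.isUnit_iff_isUnit_det _).mp (hinv j))]
  have hw_ne : ∀ j, w - z j ≠ 0 := fun j h => hwz ⟨j, (sub_eq_zero.mp h).symm⟩
  have hresidual : (w • E - A) * ∑ j, (q j / (w - z j)) • G (z j) = Q w • B + R := by
    rw [hQ]
    exact pencil_mul_barycentric_sum E A hGz q hw_ne
  have herror : Gt w - G w = (Q w)⁻¹ • ((w • E - A)⁻¹ * R) := by
    rw [hGt, hG w, inv_smul_sub_nonsing_inv_mul hw hQw hresidual]
  calc frob (Gt w - G w) / frob (G w)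
      = ‖Q w‖⁻¹ * (frob ((w • E - A)⁻¹ * R) / frob ((w • E - A)⁻¹ * B)) := by
        rw [herror, frob_smul, norm_inv, hG w, mul_div_assoc]
    _ ≤ ‖Q w‖⁻¹ * (condNum (w • E - A) * (frob R / frob B)) := by
        gcongr
        exact frob_inv_mul_div_le_condNum_mul hw hB R
    _ = γ * condNum (w • E - A) * ‖Q w‖⁻¹ := by
        rw [hγ]
        ring

/-- Relative error bound for the state surrogate:
`‖G̃(z) - G(z)‖_F / ‖G(z)‖_F ≤ γ 𝒦(zE - A) |Q(z)|⁻¹`. -/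
theorem state_relative_error_bound
    {n m S : ℕ}
    (E A : Matrix (Fin n) (Fin n) ℂ) (B : Matrix (Fin n) (Fin m) ℂ)
    (hB : B ≠ 0)
    (z : Fin S → ℂ) (hz : Function.Injective z)
    (hinv : ∀ j, IsUnit (z j • E - A))
    (q : Fin S → ℂ)
    (G : ℂ → Matrix (Fin n) (Fin m) ℂ)
    (hG : ∀ w, G w = (w • E - A)⁻¹ * B)
    (Q : ℂ → ℂ) (hQ : ∀ w, Q w = ∑ j, q j / (w - z j))
    (Gt : ℂ → Matrix (Fin n) (Fin m) ℂ)
    (hGt : ∀ w, Gt w = (Q w)⁻¹ • ∑ j, (q j / (w - z j)) • G (z j))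
    (γ : ℝ) (hγ : γ = frob (∑ j, q j • (E * G (z j))) / frob B) :
    ∀ w : ℂ, IsUnit (w • E - A) → w ∉ Set.range z → Q w ≠ 0 →
      frob (Gt w - G w) / frob (G w) ≤ γ * condNum (w • E - A) * ‖Q w‖⁻¹ :=
  state_relative_error_bound_general E A B hB z hinv q G hG Q hQ Gt hGt γ hγ
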